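/- arXiv:1912.05497 — 2 statements merged into one kernel-verified Lean document; each statement's English description precedes it below -/
import Mathlib

section
/- Let $(\eta_k)_{k\ge 0}$ be a sequence of reals with $0<\eta_k\le 1$ for all $k$, satisfying $\eta_{k+1}\le c(\eta_k+b)^{\gamma}$ for all $k$, where $0<\gamma<1$, $b>0$, $c\ge 1$ are constants. Then $\eta_k\le C(\eta_0+b)^{\gamma^k}$ for all $k$, with $C=(2c)^{1/(1-\gamma)}$. -/
/-!
Put `x = η 0 + b` and `C = (2c)^{1/(1-γ)}`, so that `C = 2c · C^γ` and hence `c (2C)^γ ≤ C`.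
If `x ≥ 1` the bound is trivial, as `η k ≤ 1 ≤ C x^{γ^k}`. If `x < 1`, then
`b ≤ x ≤ x^{γ^k}`, so `η k ≤ C x^{γ^k}` gives `η k + b ≤ 2C x^{γ^k}` and the recursion yields
`η (k+1) ≤ c (2C)^γ x^{γ^(k+1)} ≤ C x^{γ^(k+1)}`.
-/

open Real

lemma rpow_one_div_one_sub_eq_mul_rpow {a γ : ℝ} (ha : 0 ≤ a) (hγ : γ ≠ 1) :
    a ^ (1 / (1 - γ)) = a * (a ^ (1 / (1 - γ))) ^ γ := by
  have h1γ : 1 - γ ≠ 0 := sub_ne_zero.mpr hγ.symm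
  have hsplit : 1 / (1 - γ) = 1 + 1 / (1 - γ) * γ := by field_simp; ring
  rw [← rpow_mul ha]
  conv_lhs => rw [hsplit, rpow_add' ha (hsplit ▸ one_div_ne_zero h1γ), rpow_one]

lemma mul_rpow_two_mul_rpow_one_div_one_sub_le {c γ : ℝ} (hc : 0 ≤ c) (hγ : γ < 1) :
    c * (2 * (2 * c) ^ (1 / (1 - γ))) ^ γ ≤ (2 * c) ^ (1 / (1 - γ)) := by
  set C := (2 * c) ^ (1 / (1 - γ))
  have hC : C = 2 * c * C ^ γ := rpow_one_div_one_sub_eq_mul_rpow (by positivity) hγ.ne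
  have h2γ : (2 : ℝ) ^ γ ≤ 2 := rpow_le_self_of_one_le one_le_two hγ.le
  calc c * (2 * C) ^ γ = c * 2 ^ γ * C ^ γ := by
        rw [mul_rpow zero_le_two (by positivity)]; ring
    _ ≤ c * 2 * C ^ γ := by gcongr
    _ = C := by linarith

lemma le_mul_of_le_mul_add_rpow {η y : ℕ → ℝ} {γ b c C : ℝ} (hγ : 0 ≤ γ) (hc : 0 ≤ c)
    (hC : 1 ≤ C) (hcC : c * (2 * C) ^ γ ≤ C) (hη : ∀ k, 0 ≤ η k) (hb : 0 ≤ b)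
    (hby : ∀ k, b ≤ y k) (hy : ∀ k, y (k + 1) = y k ^ γ)
    (hrec : ∀ k, η (k + 1) ≤ c * (η k + b) ^ γ) (h0 : η 0 ≤ C * y 0) :
    ∀ k, η k ≤ C * y k := by
  intro k
  induction k with
  | zero => exact h0
  | succ k ih =>
    have hy0 : 0 ≤ y k := hb.trans (hby k)
    have hsum : η k + b ≤ 2 * C * y k := by nlinarith [hby k]
    calc η (k + 1) ≤ c * (η k + b) ^ γ := hrec k
      _ ≤ c * (2 * C * y k) ^ γ := by gcongr; linarith [hη k]
      _ = c * (2 * C) ^ γ * y (k + 1) := by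
          rw [hy, mul_rpow (by positivity) hy0]; ring
      _ ≤ C * y (k + 1) := by
          gcongr
          rw [hy]; positivity

lemma rpow_pow_succ {x : ℝ} (hx : 0 ≤ x) (γ : ℝ) (k : ℕ) :
    x ^ (γ ^ (k + 1)) = (x ^ (γ ^ k)) ^ γ := by
  rw [pow_succ, rpow_mul hx]

theorem iteration_lemma (η : ℕ → ℝ) (γ b c : ℝ)
    (hγ0 : 0 < γ) (hγ1 : γ < 1) (hb : 0 < b) (hc : 1 ≤ c)
    (hpos : ∀ k, 0 < η k) (hle : ∀ k, η k ≤ 1)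
    (hrec : ∀ k, η (k + 1) ≤ c * (η k + b) ^ γ) :
    ∀ k, η k ≤ (2 * c) ^ (1 / (1 - γ)) * (η 0 + b) ^ (γ ^ k) := by
  set C := (2 * c) ^ (1 / (1 - γ))
  set x := η 0 + b
  have hx : 0 < x := by linarith [hpos 0]
  have hC : 1 ≤ C := one_le_rpow (by linarith) (by rw [one_div_nonneg]; linarith)
  rcases le_or_gt 1 x with hx1 | hx1
  · intro k
    have hxk : 1 ≤ x ^ (γ ^ k) := one_le_rpow hx1 (by positivity)
    nlinarith [hle k]
  · have hbx : ∀ k, b ≤ x ^ (γ ^ k) := fun k =>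
      calc b ≤ x := by linarith [hpos 0]
        _ ≤ x ^ (γ ^ k) := self_le_rpow_of_le_one hx.le hx1.le (pow_le_one₀ hγ0.le hγ1.le)
    refine le_mul_of_le_mul_add_rpow hγ0.le (by linarith) hC
      (mul_rpow_two_mul_rpow_one_div_one_sub_le (by linarith) hγ1) (fun k => (hpos k).le)
      hb.le hbx (rpow_pow_succ hx.le γ) hrec ?_
    rw [pow_zero, rpow_one]
    nlinarith [hpos 0]
end

section
/- Let $\alpha,\beta,c,\overline{a},\overline{s}>0$ be constants. There exists a constant $C>0$, depending only on $\alpha,\beta,c,\overline{a},\overline{s}$, such that: for any $a\in(0,\overline{a}]$ and $b>0$, if $a\le s^{-\alpha}+e^{cs}b^{\beta}$ for all $s\ge \overline{s}$, then $a\le C(|\ln b|^{-\alpha}+b)$. -/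
/-!
Write `b = e^{-t}`. If `b` is bounded below, `a ≤ abar` already gives `a = O(b)`. For small `b`,
choose `s = βt/(2c)`: then `e^{cs} b^β = e^{-βt/2}`, which decays faster than any power of `t`,
and `s^{-α}` is a constant multiple of `t^{-α} = |ln b|^{-α}`.
-/

open Real
open scoped Nat

lemma exp_neg_mul_le_rpow_neg {k t : ℝ} (α : ℝ) (hk : 0 < k) (ht : 1 ≤ t) :
    exp (-(k * t)) ≤ ⌈α⌉₊ ! / k ^ ⌈α⌉₊ * t ^ (-α) := by
  set n := ⌈α⌉₊
  have hpow : t ^ α ≤ t ^ n := by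
    simpa using rpow_le_rpow_of_exponent_le ht (Nat.le_ceil α)
  have hexp : (k * t) ^ n / n ! ≤ exp (k * t) := Real.pow_div_factorial_le_exp _ (by positivity) n
  have hbound : t ^ α ≤ n ! / k ^ n * exp (k * t) := by
    calc t ^ α ≤ t ^ n := hpow
      _ = n ! / k ^ n * ((k * t) ^ n / n !) := by field_simp; ring
      _ ≤ n ! / k ^ n * exp (k * t) := by gcongr
  rw [exp_neg, rpow_neg (by positivity), inv_le_iff_one_le_mul₀' (exp_pos _)]
  calc (1 : ℝ) = t ^ α * (t ^ α)⁻¹ := (mul_inv_cancel₀ (by positivity)).symm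
    _ ≤ n ! / k ^ n * exp (k * t) * (t ^ α)⁻¹ := by gcongr
    _ = exp (k * t) * (n ! / k ^ n * (t ^ α)⁻¹) := by ring

lemma le_mul_rpow_neg_of_forall_le_exp {α β c sbar a t : ℝ} (hβ : 0 < β) (hc : 0 < c)
    (ht : 1 ≤ t) (hts : 2 * c * sbar / β ≤ t)
    (h : ∀ s, sbar ≤ s → a ≤ s ^ (-α) + exp (c * s) * exp (-t) ^ β) :
    a ≤ ((β / (2 * c)) ^ (-α) + ⌈α⌉₊ ! / (β / 2) ^ ⌈α⌉₊) * t ^ (-α) := by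
  have hst : sbar ≤ β / (2 * c) * t := by
    rw [div_le_iff₀ hβ] at hts
    rw [div_mul_eq_mul_div, le_div_iff₀ (by positivity)]
    linarith
  have hpower : (β / (2 * c) * t) ^ (-α) = (β / (2 * c)) ^ (-α) * t ^ (-α) :=
    mul_rpow (by positivity) (by positivity)
  have hexp : exp (c * (β / (2 * c) * t)) * exp (-t) ^ β = exp (-(β / 2 * t)) := by
    rw [← exp_mul, ← exp_add]
    congr 1
    field_simp
    ring
  have hdecay := exp_neg_mul_le_rpow_neg α (half_pos hβ) ht
  have ha := h _ hst
  rw [hpower, hexp] at ha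
  linarith

theorem log_stability_lemma_general (α β c abar sbar : ℝ)
    (hβ : 0 < β) (hc : 0 < c) :
    ∃ C > (0 : ℝ), ∀ a b : ℝ, 0 < a → a ≤ abar → 0 < b →
      (∀ s : ℝ, sbar ≤ s → a ≤ s ^ (-α) + Real.exp (c * s) * b ^ β) →
      a ≤ C * (|Real.log b| ^ (-α) + b) := by
  set T := max (2 * c * sbar / β) 1
  set K := (β / (2 * c)) ^ (-α) + ⌈α⌉₊ ! / (β / 2) ^ ⌈α⌉₊
  have hK : 0 < K := by positivity
  refine ⟨max K (abar / exp (-T)), lt_max_of_lt_left hK, fun a b ha hab hb h => ?_⟩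
  rcases le_or_gt (exp (-T)) b with hbig | hsmall
  · have habar : 0 ≤ abar := ha.le.trans hab
    have hlog : 0 ≤ |log b| ^ (-α) := by positivity
    calc a ≤ abar / exp (-T) * exp (-T) := by rwa [div_mul_cancel₀ _ (exp_pos _).ne']
      _ ≤ abar / exp (-T) * b := by gcongr
      _ ≤ max K (abar / exp (-T)) * (|log b| ^ (-α) + b) := by
        gcongr
        · exact le_max_right _ _
        · linarith
  · set t := -log b
    have hTt : T ≤ t := by
      have := log_lt_log hb hsmall
      rw [log_exp] at this
      linarith
    have ht : 1 ≤ t := (le_max_right _ _).trans hTt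
    have habs : |log b| = t := abs_of_neg (by linarith)
    rw [← exp_log hb, show log b = -t by ring] at h
    calc a ≤ K * t ^ (-α) :=
          le_mul_rpow_neg_of_forall_le_exp hβ hc ht ((le_max_left _ _).trans hTt) h
      _ ≤ max K (abar / exp (-T)) * (|log b| ^ (-α) + b) := by
        rw [habs]
        exact mul_le_mul (le_max_left _ _) (by linarith) (rpow_nonneg (by linarith) _)
          (hK.le.trans (le_max_left _ _))

theorem log_stability_lemma (α β c abar sbar : ℝ)
    (hα : 0 < α) (hβ : 0 < β) (hc : 0 < c) (habar : 0 < abar) (hsbar : 0 < sbar) :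
    ∃ C > (0 : ℝ), ∀ a b : ℝ, 0 < a → a ≤ abar → 0 < b →
      (∀ s : ℝ, sbar ≤ s → a ≤ s ^ (-α) + Real.exp (c * s) * b ^ β) →
      a ≤ C * (|Real.log b| ^ (-α) + b) :=
  log_stability_lemma_general α β c abar sbar hβ hc
end
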